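/- arXiv:2211.09403 — 2 statements merged into one kernel-verified Lean document; each statement's English description precedes it below -/
import Mathlib

section
/- Let F be a sigma-algebra, and let A_i ≤ B_i be F-measurable random variables for i = 1,...,n. Suppose X_1,...,X_n are random variables with X_i ∈ [A_i, B_i] almost surely, and the X_i are conditionally independent given F. Then for S_n = X_1 + ... + X_n and any ε > 0, P(S_n − E[S_n | F] > ε | F) ≤ exp(−2ε² / Σ_i (B_i − A_i)²) almost surely. -/
open MeasureTheory ProbabilityTheory

namespace CondHoeffdingAux

open Real

section Unconditional

lemma hoeff_core {p : ℝ} (hp0 : 0 ≤ p) (hp1 : p ≤ 1) (h : ℝ) :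
    1 - p + p * Real.exp h ≤ Real.exp (p * h + h ^ 2 / 8) := by
  set g : ℝ → ℝ := fun x => 1 - p + p * Real.exp x with hg_def
  have hg_pos : ∀ x, 0 < g x := by
    intro x
    have hexp := Real.exp_pos x
    rcases eq_or_lt_of_le hp0 with h0 | h0
    · simp only [hg_def, ← h0]; norm_num
    · have := mul_pos h0 hexp
      simp only [hg_def]; linarith
  have hg_deriv : ∀ x, HasDerivAt g (p * Real.exp x) x := by
    intro x
    exact ((Real.hasDerivAt_exp x).const_mul p).const_add (1 - p)
  set f : ℝ → ℝ := fun x => p * x + x ^ 2 / 8 - Real.log (g x) with hf_def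
  set φ : ℝ → ℝ := fun x => p + x / 4 - p * Real.exp x / g x with hφ_def
  have hf_deriv : ∀ x, HasDerivAt f (φ x) x := by
    intro x
    have h1 : HasDerivAt (fun x : ℝ => p * x + x ^ 2 / 8) (p + x * 2 / 8) x := by
      have := ((hasDerivAt_pow 2 x).div_const 8).const_add (0 : ℝ)
      have h2 := (hasDerivAt_id x).const_mul p
      exact (h2.add ((hasDerivAt_pow 2 x).div_const 8)).congr_deriv (by push_cast; ring)
    have h2 : HasDerivAt (fun x => Real.log (g x)) (p * Real.exp x / g x) x :=
      (hg_deriv x).log (hg_pos x).ne'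
    have := h1.sub h2
    exact this.congr_deriv (by rw [hφ_def]; ring)
  set ψ : ℝ → ℝ := fun x =>
    1 / 4 - (p * Real.exp x * g x - p * Real.exp x * (p * Real.exp x)) / g x ^ 2 with hψ_def
  have hφ_deriv : ∀ x, HasDerivAt φ (ψ x) x := by
    intro x
    have h1 : HasDerivAt (fun x : ℝ => p + x / 4) (1 / 4) x := by
      simpa using ((hasDerivAt_id x).div_const 4).const_add p
    have h2 : HasDerivAt (fun x => p * Real.exp x / g x)
        ((p * Real.exp x * g x - p * Real.exp x * (p * Real.exp x)) / g x ^ 2) x :=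
      ((Real.hasDerivAt_exp x).const_mul p).div (hg_deriv x) (hg_pos x).ne'
    exact h1.sub h2
  have hψ_nonneg : ∀ x, 0 ≤ ψ x := by
    intro x
    have hgx := hg_pos x
    have hgsq : 0 < g x ^ 2 := by positivity
    rw [hψ_def, sub_nonneg, div_le_iff₀ hgsq]
    have hexp := (Real.exp_pos x).le
    have key : g x = (1 - p) + p * Real.exp x := rfl
    nlinarith [sq_nonneg ((1 - p) - p * Real.exp x), mul_nonneg hp0 hexp]
  have hφ_mono : Monotone φ := by
    have : ∀ x, 0 ≤ deriv φ x := fun x => (hφ_deriv x).deriv ▸ hψ_nonneg x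
    exact monotone_of_deriv_nonneg (fun x => (hφ_deriv x).differentiableAt) this
  have hφ0 : φ 0 = 0 := by
    simp only [hφ_def, hg_def, Real.exp_zero, mul_one]
    field_simp
    ring
  have hf0 : f 0 = 0 := by
    simp [hf_def, hg_def]
  have hf_nonneg : ∀ x, 0 ≤ f x := by
    intro x
    rcases le_total 0 x with hx | hx
    · have hmono : MonotoneOn f (Set.Ici (0 : ℝ)) := by
        apply monotoneOn_of_deriv_nonneg (convex_Ici 0)
          (Continuous.continuousOn
            (Differentiable.continuous (fun x => (hf_deriv x).differentiableAt)))
          (fun x _ => ((hf_deriv x).differentiableAt).differentiableWithinAt)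
        intro y hy
        rw [(hf_deriv y).deriv]
        have : (0:ℝ) ≤ y := le_of_lt (by simpa using hy)
        calc (0:ℝ) = φ 0 := hφ0.symm
        _ ≤ φ y := hφ_mono this
      have := hmono (Set.self_mem_Ici) (Set.mem_Ici.mpr hx) hx
      linarith [hf0 ▸ this]
    · have hanti : AntitoneOn f (Set.Iic (0 : ℝ)) := by
        apply antitoneOn_of_deriv_nonpos (convex_Iic 0)
          (Continuous.continuousOn
            (Differentiable.continuous (fun x => (hf_deriv x).differentiableAt)))
          (fun x _ => ((hf_deriv x).differentiableAt).differentiableWithinAt)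
        intro y hy
        rw [(hf_deriv y).deriv]
        have : y ≤ (0:ℝ) := le_of_lt (by simpa using hy)
        calc φ y ≤ φ 0 := hφ_mono this
        _ = 0 := hφ0
      have := hanti (Set.mem_Iic.mpr hx) (Set.self_mem_Iic) hx
      linarith [hf0 ▸ this]
  have hfh := hf_nonneg h
  have hlog : Real.log (g h) ≤ p * h + h ^ 2 / 8 := by
    simp only [hf_def] at hfh; linarith
  calc 1 - p + p * Real.exp h = g h := rfl
  _ = Real.exp (Real.log (g h)) := (Real.exp_log (hg_pos h)).symm
  _ ≤ Real.exp (p * h + h ^ 2 / 8) := Real.exp_le_exp.mpr hlog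



variable {Ω' : Type*} [MeasurableSpace Ω'] {ν : Measure Ω'} [IsProbabilityMeasure ν]

lemma integrable_exp_mul_of_bounded {Y : Ω' → ℝ} (hY : Measurable Y) {a b : ℝ}
    (hab : ∀ᵐ x ∂ν, Y x ∈ Set.Icc a b) (t : ℝ) :
    Integrable (fun x => Real.exp (t * Y x)) ν := by
  refine Integrable.mono' (integrable_const (Real.exp (|t| * (|a| + |b|))))
    ((hY.const_mul t).exp.aestronglyMeasurable) ?_
  filter_upwards [hab] with x hx
  rw [Real.norm_eq_abs, abs_of_pos (Real.exp_pos _)]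
  apply Real.exp_le_exp.mpr
  have h1 : |Y x| ≤ |a| + |b| := by
    rcases hx with ⟨h1, h2⟩
    rw [abs_le]
    constructor
    · calc -(|a| + |b|) ≤ -|a| := by linarith [abs_nonneg b]
      _ ≤ a := neg_abs_le a
      _ ≤ Y x := h1
    · calc Y x ≤ b := h2
      _ ≤ |b| := le_abs_self b
      _ ≤ |a| + |b| := by linarith [abs_nonneg a]
  calc t * Y x ≤ |t * Y x| := le_abs_self _
  _ = |t| * |Y x| := abs_mul t (Y x)
  _ ≤ |t| * (|a| + |b|) := by
      exact mul_le_mul_of_nonneg_left h1 (abs_nonneg t)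

/-- **Hoeffding's lemma**. -/
lemma hoeffding_lemma {Y : Ω' → ℝ} (hY : Measurable Y)
    (hint : Integrable Y ν) (h0 : ∫ x, Y x ∂ν = 0) {a b : ℝ}
    (hab : ∀ᵐ x ∂ν, Y x ∈ Set.Icc a b) (t : ℝ) :
    mgf Y ν t ≤ Real.exp (t ^ 2 * (b - a) ^ 2 / 8) := by
  have hν : ν ≠ 0 := IsProbabilityMeasure.ne_zero ν
  obtain ⟨x₀, hx₀⟩ := hab.exists
  have hab' : a ≤ b := hx₀.1.trans hx₀.2
  -- a ≤ 0 ≤ b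
  have ha0 : a ≤ 0 := by
    have : ∫ x, (fun _ => a) x ∂ν ≤ ∫ x, Y x ∂ν :=
      integral_mono_ae (integrable_const a) hint (hab.mono fun x hx => hx.1)
    simpa [h0] using this
  have hb0 : 0 ≤ b := by
    have : ∫ x, Y x ∂ν ≤ ∫ x, (fun _ => b) x ∂ν :=
      integral_mono_ae hint (integrable_const b) (hab.mono fun x hx => hx.2)
    simpa [h0] using this
  rcases eq_or_lt_of_le hab' with heq | hlt
  · -- degenerate case a = b, so a = b = 0 and Y = 0 a.e.
    have ha : a = 0 := le_antisymm ha0 (heq ▸ hb0)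
    have hYa : ∀ᵐ x ∂ν, Y x = 0 := by
      filter_upwards [hab] with x hx
      have := hx.1; have := hx.2
      rw [← heq] at *; linarith [ha ▸ hx.1, ha ▸ (heq ▸ hx.2 : Y x ≤ a)]
    have : mgf Y ν t = 1 := by
      rw [mgf]
      have : (fun x => Real.exp (t * Y x)) =ᵐ[ν] fun _ => (1 : ℝ) := by
        filter_upwards [hYa] with x hx; simp [hx]
      rw [integral_congr_ae this]
      simp
    rw [this]
    have : (0:ℝ) ≤ t ^ 2 * (b - a) ^ 2 / 8 := by positivity
    calc (1:ℝ) = Real.exp 0 := Real.exp_zero.symm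
    _ ≤ _ := Real.exp_le_exp.mpr this
  · have hba : 0 < b - a := sub_pos.mpr hlt
    set p : ℝ := -a / (b - a) with hp_def
    have hp0 : 0 ≤ p := div_nonneg (neg_nonneg.mpr ha0) hba.le
    have hp1 : p ≤ 1 := by
      rw [hp_def, div_le_one hba]; linarith
    -- pointwise convexity bound
    set c1 : ℝ := (Real.exp (t * b) - Real.exp (t * a)) / (b - a) with hc1_def
    set c2 : ℝ := (b * Real.exp (t * a) - a * Real.exp (t * b)) / (b - a) with hc2_def
    have hpt : ∀ᵐ x ∂ν, Real.exp (t * Y x) ≤ c1 * Y x + c2 := by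
      filter_upwards [hab] with x hx
      obtain ⟨h1, h2⟩ := hx
      set lam : ℝ := (b - Y x) / (b - a) with hlam_def
      have hlam0 : 0 ≤ lam := div_nonneg (by linarith) hba.le
      have hlam1 : 1 - lam = (Y x - a) / (b - a) := by
        rw [hlam_def]; field_simp
        ring
      have hlam1' : 0 ≤ 1 - lam := by rw [hlam1]; exact div_nonneg (by linarith) hba.le
      have hconv := convexOn_exp.2 (Set.mem_univ (t * a)) (Set.mem_univ (t * b))
        hlam0 hlam1' (by ring)
      have harg : lam • (t * a) + (1 - lam) • (t * b) = t * Y x := by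
        simp only [smul_eq_mul, hlam_def, hlam1]
        field_simp
        ring
      rw [harg] at hconv
      calc Real.exp (t * Y x) ≤ lam * Real.exp (t * a) + (1 - lam) * Real.exp (t * b) := by
            simpa using hconv
      _ = c1 * Y x + c2 := by
          simp only [hlam_def, hlam1, hc1_def, hc2_def]
          field_simp
          ring
    -- integrate
    have hcx : Integrable (fun x => c1 * Y x + c2) ν := (hint.const_mul c1).add (integrable_const c2)
    have hintexp := integrable_exp_mul_of_bounded hY hab t
    have hmgf : mgf Y ν t ≤ c2 := by
      have := integral_mono_ae hintexp hcx hpt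
      rw [mgf]
      calc ∫ x, Real.exp (t * Y x) ∂ν ≤ ∫ x, (c1 * Y x + c2) ∂ν := this
      _ = c1 * ∫ x, Y x ∂ν + c2 := by
          rw [integral_add (hint.const_mul c1) (integrable_const c2), integral_const_mul,
            integral_const]
          simp
      _ = c2 := by rw [h0]; ring
    -- apply the core lemma
    have hkey : c2 = Real.exp (t * a) * (1 - p + p * Real.exp (t * (b - a))) := by
      rw [hc2_def, hp_def]
      have : Real.exp (t * b) = Real.exp (t * a) * Real.exp (t * (b - a)) := by
        rw [← Real.exp_add]; ring_nf
      rw [this]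
      field_simp
      ring
    have hcore := hoeff_core hp0 hp1 (t * (b - a))
    have hph : p * (t * (b - a)) = -(t * a) := by
      rw [hp_def]; field_simp
    calc mgf Y ν t ≤ c2 := hmgf
    _ = Real.exp (t * a) * (1 - p + p * Real.exp (t * (b - a))) := hkey
    _ ≤ Real.exp (t * a) * Real.exp (p * (t * (b - a)) + (t * (b - a)) ^ 2 / 8) := by
        exact mul_le_mul_of_nonneg_left hcore (Real.exp_pos _).le
    _ = Real.exp (t * a + (-(t * a) + (t * (b - a)) ^ 2 / 8)) := by
        rw [← Real.exp_add, hph]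
    _ = Real.exp (t ^ 2 * (b - a) ^ 2 / 8) := by ring_nf


variable {Ω' : Type*} [MeasurableSpace Ω'] {ν : Measure Ω'} [IsProbabilityMeasure ν]



/-- **Hoeffding's inequality** for a probability measure. -/
lemma hoeffding_ineq (n : ℕ) (a b : Fin n → ℝ) (X : Fin n → Ω' → ℝ)
    (hX : ∀ i, Measurable (X i)) (hint : ∀ i, Integrable (X i) ν)
    (hab : ∀ i, ∀ᵐ x ∂ν, X i x ∈ Set.Icc (a i) (b i))
    (hind : iIndepFun X ν) {ε : ℝ} (hε : 0 < ε) :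
    (ν {x | (∑ i, X i x) - ∫ y, ∑ i, X i y ∂ν > ε}).toReal ≤
      Real.exp (-(2 * ε ^ 2) / ∑ i, (b i - a i) ^ 2) := by
  set D : ℝ := ∑ i, (b i - a i) ^ 2 with hD_def
  have hD0 : 0 ≤ D := Finset.sum_nonneg fun i _ => sq_nonneg _
  rcases eq_or_lt_of_le hD0 with hD | hD
  · -- degenerate: D = 0, RHS = exp 0 = 1
    rw [← hD, div_zero, Real.exp_zero]
    calc (ν _).toReal ≤ (ν Set.univ).toReal := by
          apply ENNReal.toReal_mono (measure_ne_top _ _) (measure_mono (Set.subset_univ _))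
    _ = 1 := by simp
  · set t : ℝ := 4 * ε / D with ht_def
    have ht : 0 < t := by positivity
    set c : Fin n → ℝ := fun i => ∫ x, X i x ∂ν with hc_def
    set Y : Fin n → Ω' → ℝ := fun i x => X i x - c i with hY_def
    have hYmeas : ∀ i, Measurable (Y i) := fun i => (hX i).sub_const (c i)
    have hYint : ∀ i, Integrable (Y i) ν := fun i => (hint i).sub (integrable_const (c i))
    have hY0 : ∀ i, ∫ x, Y i x ∂ν = 0 := by
      intro i
      simp only [hY_def]
      rw [integral_sub (hint i) (integrable_const (c i)), integral_const]
      simp [hc_def]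
    have hYab : ∀ i, ∀ᵐ x ∂ν, Y i x ∈ Set.Icc (a i - c i) (b i - c i) := by
      intro i
      filter_upwards [hab i] with x hx
      exact ⟨by simp only [hY_def]; linarith [hx.1], by simp only [hY_def]; linarith [hx.2]⟩
    have hYind : iIndepFun Y ν := by
      have := hind.comp (fun i => fun y : ℝ => y - c i) (fun i => measurable_id.sub_const (c i))
      exact this
    have hYexp : ∀ i, Integrable (fun x => Real.exp (t * Y i x)) ν := fun i =>
      integrable_exp_mul_of_bounded (hYmeas i) (hYab i) t
    -- sum of Y equals S - ∫ S
    have hsum : ∀ x, (∑ i, Y i x) = (∑ i, X i x) - ∫ y, ∑ i, X i y ∂ν := by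
      intro x
      rw [integral_finset_sum _ (fun i _ => hint i)]
      simp only [hY_def, Finset.sum_sub_distrib, hc_def]
    have hsubset : {x | (∑ i, X i x) - ∫ y, ∑ i, X i y ∂ν > ε} ⊆ {x | ε ≤ (∑ i, Y i) x} := by
      intro x hx
      simp only [Set.mem_setOf_eq, Finset.sum_apply]
      rw [hsum x]
      exact le_of_lt hx
    have hexp_sum : Integrable (fun x => Real.exp (t * (∑ i, Y i) x)) ν :=
      iIndepFun.integrable_exp_mul_sum hYind hYmeas (fun i _ => hYexp i)
    have hchernoff := measure_ge_le_exp_mul_mgf (X := ∑ i, Y i) (μ := ν) ε ht.le hexp_sum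
    have hmono : (ν {x | (∑ i, X i x) - ∫ y, ∑ i, X i y ∂ν > ε}).toReal ≤
        (ν {x | ε ≤ (∑ i, Y i) x}).toReal :=
      ENNReal.toReal_mono (measure_ne_top _ _) (measure_mono hsubset)
    have hmgf : mgf (∑ i, Y i) ν t ≤ Real.exp (t ^ 2 * D / 8) := by
      rw [iIndepFun.mgf_sum hYind hYmeas]
      have : ∀ i ∈ Finset.univ, mgf (Y i) ν t ≤ Real.exp (t ^ 2 * (b i - a i) ^ 2 / 8) := by
        intro i _
        have := hoeffding_lemma (hYmeas i) (hYint i) (hY0 i) (hYab i) t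
        have heq : (b i - c i - (a i - c i)) = b i - a i := by ring
        rwa [heq] at this
      calc ∏ i, mgf (Y i) ν t ≤ ∏ i, Real.exp (t ^ 2 * (b i - a i) ^ 2 / 8) :=
            Finset.prod_le_prod (fun i _ => mgf_nonneg) this
      _ = Real.exp (∑ i, t ^ 2 * (b i - a i) ^ 2 / 8) := by
            rw [Real.exp_sum]
      _ = Real.exp (t ^ 2 * D / 8) := by
            congr 1
            rw [hD_def, Finset.mul_sum, Finset.sum_div]
    calc (ν {x | (∑ i, X i x) - ∫ y, ∑ i, X i y ∂ν > ε}).toReal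
        ≤ (ν {x | ε ≤ (∑ i, Y i) x}).toReal := hmono
    _ ≤ Real.exp (-t * ε) * mgf (∑ i, Y i) ν t := hchernoff
    _ ≤ Real.exp (-t * ε) * Real.exp (t ^ 2 * D / 8) :=
        mul_le_mul_of_nonneg_left hmgf (Real.exp_pos _).le
    _ = Real.exp (-t * ε + t ^ 2 * D / 8) := (Real.exp_add _ _).symm
    _ = Real.exp (-(2 * ε ^ 2) / D) := by
        congr 1
        rw [ht_def]
        field_simp
        ring


end Unconditional

section KernelTransfer

variable {Ω : Type*} {F mΩ : MeasurableSpace Ω} [StandardBorelSpace Ω]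
  {μ : Measure Ω} [IsProbabilityMeasure μ] (hF : F ≤ mΩ)

include hF


lemma condexpKernel_null {N : Set Ω} (hN : MeasurableSet N) (h0 : μ N = 0) :
    ∀ᵐ ω ∂μ, condExpKernel μ F ω N = 0 := by
  have h1 := condExpKernel_ae_eq_condExp (μ := μ) hF hN
  have h2 : μ⟦N | F⟧ =ᵐ[μ] 0 := by
    have hind : N.indicator (fun _ => (1:ℝ)) =ᵐ[μ] 0 := by
      rw [Filter.EventuallyEq, ae_iff]
      apply measure_mono_null _ h0
      intro x hx
      simp only [Set.mem_setOf_eq] at hx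
      by_contra hxN
      exact hx (by simp [Set.indicator_of_notMem hxN])
    calc μ[N.indicator (fun _ => (1:ℝ)) | F] =ᵐ[μ] μ[(0 : Ω → ℝ) | F] := condExp_congr_ae hind
    _ = 0 := condExp_zero
    _ =ᵐ[μ] 0 := Filter.EventuallyEq.rfl
  filter_upwards [h1.trans h2] with ω hω
  simp only [Pi.zero_apply] at hω
  have hfin : condExpKernel μ F ω N ≠ ⊤ := measure_ne_top _ _
  rw [measureReal_def, ENNReal.toReal_eq_zero_iff] at hω
  tauto

lemma ae_condexpKernel_ae {P : Ω → Prop} (h : ∀ᵐ x ∂μ, P x) :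
    ∀ᵐ ω ∂μ, ∀ᵐ x ∂(condExpKernel μ F ω), P x := by
  obtain ⟨N, hsub, hNmeas, hN0⟩ := exists_measurable_superset_of_null (ae_iff.mp h)
  filter_upwards [condexpKernel_null hF hNmeas hN0] with ω hω
  rw [ae_iff]
  exact measure_mono_null (fun x hx => hsub hx) hω

lemma condexpKernel_fmeas_ae_eq {g : Ω → ℝ} (hg : Measurable[F] g) :
    ∀ᵐ ω ∂μ, ∀ᵐ x ∂(condExpKernel μ F ω), g x = g ω := by
  have hgm : Measurable g := hg.mono hF le_rfl
  have hq : ∀ q : ℚ, ∀ᵐ ω ∂μ,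
      (condExpKernel μ F ω (g ⁻¹' Set.Iic (q : ℝ))).toReal
        = (g ⁻¹' Set.Iic (q : ℝ)).indicator (fun _ => (1:ℝ)) ω := by
    intro q
    have hsF : MeasurableSet[F] (g ⁻¹' Set.Iic (q : ℝ)) := hg measurableSet_Iic
    have hs : MeasurableSet (g ⁻¹' Set.Iic (q : ℝ)) := hF _ hsF
    have h1 := condExpKernel_ae_eq_condExp (μ := μ) hF hs
    have h2 : μ⟦g ⁻¹' Set.Iic (q : ℝ) | F⟧
        = (g ⁻¹' Set.Iic (q : ℝ)).indicator (fun _ => (1:ℝ)) := by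
      apply condExp_of_stronglyMeasurable hF
      · exact (stronglyMeasurable_const (β := ℝ)).indicator hsF
      · exact (integrable_const (1:ℝ)).indicator hs
    filter_upwards [h1] with ω hω
    rw [← measureReal_def, hω, h2]
  rw [← ae_all_iff] at hq
  filter_upwards [hq] with ω hω
  -- show the kernel gives full measure to {x | g x = g ω}
  rw [ae_iff]
  set ν := condExpKernel μ F ω with hν_def
  haveI : IsProbabilityMeasure ν := by rw [hν_def]; infer_instance
  have hval : ∀ q : ℚ, ((g ω : ℝ) ≤ q → ν (g ⁻¹' Set.Iic (q : ℝ)) = 1) ∧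
      (¬((g ω : ℝ) ≤ q) → ν (g ⁻¹' Set.Iic (q : ℝ)) = 0) := by
    intro q
    have := hω q
    constructor
    · intro hle
      rw [Set.indicator_of_mem (by simpa using hle)] at this
      have hne : ν (g ⁻¹' Set.Iic (q : ℝ)) ≠ ⊤ := measure_ne_top _ _
      rw [← ENNReal.ofReal_toReal hne, this]
      simp
    · intro hle
      rw [Set.indicator_of_notMem (by simpa using hle)] at this
      have hne : ν (g ⁻¹' Set.Iic (q : ℝ)) ≠ ⊤ := measure_ne_top _ _
      rw [← ENNReal.ofReal_toReal hne, this]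
      simp
  have hsub : {x | ¬ g x = g ω} ⊆ ⋃ q : ℚ,
      (if (g ω : ℝ) ≤ (q:ℝ) then (g ⁻¹' Set.Iic (q : ℝ))ᶜ else g ⁻¹' Set.Iic (q : ℝ)) := by
    intro x hx
    simp only [Set.mem_setOf_eq] at hx
    rcases lt_or_gt_of_ne hx with hlt | hgt
    · obtain ⟨q, hq1, hq2⟩ := exists_rat_btwn hlt
      refine Set.mem_iUnion.mpr ⟨q, ?_⟩
      rw [if_neg (not_le.mpr hq2)]
      exact Set.mem_preimage.mpr (Set.mem_Iic.mpr hq1.le)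
    · obtain ⟨q, hq1, hq2⟩ := exists_rat_btwn hgt
      refine Set.mem_iUnion.mpr ⟨q, ?_⟩
      rw [if_pos hq1.le]
      intro hmem
      exact absurd (Set.mem_Iic.mp (Set.mem_preimage.mp hmem)) (not_le.mpr hq2)
  apply measure_mono_null hsub
  apply measure_iUnion_null
  intro q
  by_cases hle : (g ω : ℝ) ≤ (q:ℝ)
  · rw [if_pos hle]
    have h1 := (hval q).1 hle
    have hmeas : MeasurableSet (g ⁻¹' Set.Iic (q : ℝ)) := hgm measurableSet_Iic
    have : ν (g ⁻¹' Set.Iic (q : ℝ))ᶜ = ν Set.univ - ν (g ⁻¹' Set.Iic (q : ℝ)) :=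
      measure_compl hmeas (measure_ne_top _ _)
    rw [this, h1]
    simp
  · rw [if_neg hle]
    exact (hval q).2 hle



lemma indep_transfer {n : ℕ} {X : Fin n → Ω → ℝ} (hX : ∀ i, Measurable (X i))
    (hindep : iCondIndepFun F hF X μ) :
    ∀ᵐ ω ∂μ, iIndepFun X (condExpKernel μ F ω) := by
  classical
  -- extract a countable family of product identities
  have hkey : ∀ᵐ ω ∂μ, ∀ (s : Finset (Fin n)) (q : Fin n → ℚ),
      condExpKernel μ F ω (⋂ i ∈ s, X i ⁻¹' Set.Iic ((q i : ℝ)))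
        = ∏ i ∈ s, condExpKernel μ F ω (X i ⁻¹' Set.Iic ((q i : ℝ))) := by
    rw [ae_all_iff]
    intro s
    rw [ae_all_iff]
    intro q
    refine ae_of_ae_trim hF ?_
    exact hindep s (fun i _ => ⟨Set.Iic ((q i : ℝ)), measurableSet_Iic, rfl⟩)
  filter_upwards [hkey] with ω hω
  set ν := condExpKernel μ F ω with hν_def
  set pis : Fin n → Set (Set Ω) := fun i => ⋃ q : ℚ, {X i ⁻¹' Set.Iic ((q : ℝ))} with hpis_def
  have hpis_mem : ∀ i (u : Set Ω), u ∈ pis i ↔ ∃ q : ℚ, u = X i ⁻¹' Set.Iic ((q : ℝ)) := by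
    intro i u
    simp [hpis_def, eq_comm]
  have hpi : ∀ i, IsPiSystem (pis i) := by
    intro i u hu v hv _
    obtain ⟨q, rfl⟩ := (hpis_mem i u).mp hu
    obtain ⟨r, rfl⟩ := (hpis_mem i v).mp hv
    rw [hpis_mem]
    refine ⟨min q r, ?_⟩
    rw [← Set.preimage_inter, Set.Iic_inter_Iic]
    norm_cast
  have hgen : ∀ i, MeasurableSpace.comap (X i) inferInstance
      = MeasurableSpace.generateFrom (pis i) := by
    intro i
    conv_lhs => rw [(inferInstance : BorelSpace ℝ).measurable_eq, borel_eq_generateFrom_Iic_rat,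
      MeasurableSpace.comap_generateFrom]
    congr 1
    ext u
    simp only [Set.mem_image, Set.mem_iUnion, Set.mem_singleton_iff, hpis_mem]
    constructor
    · rintro ⟨v, ⟨q, hq⟩, rfl⟩
      exact ⟨q, by rw [hq]⟩
    · rintro ⟨q, rfl⟩
      exact ⟨Set.Iic ((q:ℝ)), ⟨q, rfl⟩, rfl⟩
  have hsets : iIndepSets pis ν := by
    rw [iIndepSets_iff]
    intro s f hf
    have hq : ∀ i, ∃ q : ℚ, i ∈ s → f i = X i ⁻¹' Set.Iic ((q : ℝ)) := by
      intro i
      by_cases hi : i ∈ s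
      · obtain ⟨q, hq⟩ := (hpis_mem i (f i)).mp (hf i hi)
        exact ⟨q, fun _ => hq⟩
      · exact ⟨0, fun h => absurd h hi⟩
    choose q hq using hq
    have h1 : (⋂ i ∈ s, f i) = ⋂ i ∈ s, X i ⁻¹' Set.Iic ((q i : ℝ)) :=
      Set.iInter₂_congr fun i hi => hq i hi
    have h2 : ∏ i ∈ s, ν (f i) = ∏ i ∈ s, ν (X i ⁻¹' Set.Iic ((q i : ℝ))) :=
      Finset.prod_congr rfl fun i hi => by rw [hq i hi]
    rw [h1, h2]
    exact hω s q
  have hle : ∀ i, MeasurableSpace.comap (X i) (inferInstance : MeasurableSpace ℝ) ≤ mΩ :=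
    fun i => (hX i).comap_le
  have hiIndep : iIndep (fun i => MeasurableSpace.comap (X i)
      (inferInstance : MeasurableSpace ℝ)) ν :=
    iIndepSets.iIndep hle pis hpi hgen hsets
  rwa [iIndepFun_iff_iIndep]








lemma main_aux (n : ℕ) (A B X : Fin n → Ω → ℝ)
    (hA : ∀ i, Measurable[F] (A i)) (hB : ∀ i, Measurable[F] (B i))
    (hX : ∀ i, Measurable (X i)) (hXint : ∀ i, Integrable (X i) μ)
    (hbound : ∀ i, ∀ᵐ ω ∂μ, A i ω ≤ X i ω ∧ X i ω ≤ B i ω)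
    (hindep : iCondIndepFun F hF X μ)
    (ε : ℝ) (hε : 0 < ε) :
    ∀ᵐ ω ∂μ,
      (μ[Set.indicator
          {ω' | (∑ i, X i ω') - (μ[fun ω'' => ∑ i, X i ω'' | F]) ω' > ε}
          (fun _ => (1 : ℝ)) | F]) ω ≤
        Real.exp (-(2 * ε ^ 2) / ∑ i, (B i ω - A i ω) ^ 2) := by
  have hSmeas : Measurable (fun x => ∑ i, X i x) :=
    Finset.measurable_sum _ (fun i _ => hX i)
  have hSint : Integrable (fun x => ∑ i, X i x) μ :=
    integrable_finset_sum _ (fun i _ => hXint i)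
  set m' : Ω → ℝ := μ[fun ω'' => ∑ i, X i ω'' | F] with hm'_def
  have hm'F : Measurable[F] m' := stronglyMeasurable_condExp.measurable
  have hm'meas : Measurable m' := hm'F.mono hF le_rfl
  set E : Set Ω := {ω' | (∑ i, X i ω') - m' ω' > ε} with hE_def
  have hEmeas : MeasurableSet E := by
    have : Measurable fun x => (∑ i, X i x) - m' x := hSmeas.sub hm'meas
    exact measurableSet_lt measurable_const this
  have hEint : Integrable (E.indicator fun _ => (1:ℝ)) μ :=
    (integrable_const (1:ℝ)).indicator hEmeas
  have h3 := condExp_ae_eq_integral_condExpKernel (μ := μ) hF hEint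
  have h2 := condExp_ae_eq_integral_condExpKernel (μ := μ) hF hSint
  have h7 := condexpKernel_fmeas_ae_eq (μ := μ) hF hm'F
  have h4 : ∀ᵐ ω ∂μ, ∀ i, ∀ᵐ x ∂(condExpKernel μ F ω), A i x ≤ X i x ∧ X i x ≤ B i x :=
    ae_all_iff.mpr fun i => ae_condexpKernel_ae hF (hbound i)
  have hA' : ∀ᵐ ω ∂μ, ∀ i, ∀ᵐ x ∂(condExpKernel μ F ω), A i x = A i ω :=
    ae_all_iff.mpr fun i => condexpKernel_fmeas_ae_eq hF (hA i)
  have hB' : ∀ᵐ ω ∂μ, ∀ i, ∀ᵐ x ∂(condExpKernel μ F ω), B i x = B i ω :=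
    ae_all_iff.mpr fun i => condexpKernel_fmeas_ae_eq hF (hB i)
  have h5 : ∀ᵐ ω ∂μ, ∀ i, Integrable (X i) (condExpKernel μ F ω) :=
    ae_all_iff.mpr fun i => (hXint i).condExpKernel_ae
  have h6 := indep_transfer hF hX hindep
  filter_upwards [h3, h2, h7, h4, hA', hB', h5, h6] with ω hω3 hω2 hω7 hω4 hωA hωB hω5 hω6
  set ν := condExpKernel μ F ω with hν_def
  haveI : IsProbabilityMeasure ν := by rw [hν_def]; infer_instance
  have hind_eq : ∫ y, E.indicator (fun _ => (1:ℝ)) y ∂ν = (ν E).toReal :=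
    integral_indicator_one hEmeas
  rw [hω3, hind_eq]
  have hab : ∀ i, ∀ᵐ x ∂ν, X i x ∈ Set.Icc (A i ω) (B i ω) := by
    intro i
    filter_upwards [hω4 i, hωA i, hωB i] with x hx hxA hxB
    exact ⟨hxA ▸ hx.1, hxB ▸ hx.2⟩
  have hset : E =ᵐ[ν] {x | (∑ i, X i x) - ∫ y, ∑ i, X i y ∂ν > ε} := by
    filter_upwards [hω7] with x hx
    have h9 : m' x = ∫ y, ∑ i, X i y ∂ν := by rw [hx]; exact hω2
    simp only [hE_def, Set.mem_setOf_eq, eq_iff_iff]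
    show (∑ i, X i x) - m' x > ε ↔ (∑ i, X i x) - ∫ y, ∑ i, X i y ∂ν > ε
    rw [h9]
  rw [measure_congr hset]
  exact hoeffding_ineq n (fun i => A i ω) (fun i => B i ω) X hX hω5 hab hω6 hε


end KernelTransfer

end CondHoeffdingAux

/-- Conditional Hoeffding inequality: if `X_i ∈ [A_i, B_i]` a.s. for `F`-measurable
`A_i ≤ B_i`, and the `X_i` are conditionally independent given `F`, then for
`S_n = Σ_i X_i` and any `ε > 0`,
`P(S_n − E[S_n | F] > ε | F) ≤ exp(−2ε² / Σ_i (B_i − A_i)²)` almost surely. -/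
theorem conditional_hoeffding_inequality {Ω : Type*} (F : MeasurableSpace Ω) {mΩ : MeasurableSpace Ω}
    [StandardBorelSpace Ω]
    (μ : Measure Ω) [IsProbabilityMeasure μ]
    (hF : F ≤ mΩ)
    (n : ℕ) (A B X : Fin n → Ω → ℝ)
    (hA : ∀ i, Measurable[F] (A i)) (hB : ∀ i, Measurable[F] (B i))
    (hX : ∀ i, Measurable (X i)) (hXint : ∀ i, Integrable (X i) μ)
    (hbound : ∀ i, ∀ᵐ ω ∂μ, A i ω ≤ X i ω ∧ X i ω ≤ B i ω)
    (hindep : iCondIndepFun F hF X μ)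
    (ε : ℝ) (hε : 0 < ε) :
    ∀ᵐ ω ∂μ,
      (μ[Set.indicator
          {ω' | (∑ i, X i ω') - (μ[fun ω'' => ∑ i, X i ω'' | F]) ω' > ε}
          (fun _ => (1 : ℝ)) | F]) ω ≤
        Real.exp (-(2 * ε ^ 2) / ∑ i, (B i ω - A i ω) ^ 2) :=
  CondHoeffdingAux.main_aux hF n A B X hA hB hX
    hXint hbound hindep ε hε
end

section
/- Let M be a symmetric PSD matrix of the form M = Σ_{k=1}^K p_k y_k y_k^T where p_k > 0 and y_k ∈ R^S are unit vectors, and let M̂ be any symmetric matrix with ||M̂ − M|| ≤ ε (operator norm). Let V V^T be the orthogonal projector onto the top-K eigenspace of M̂. Then for each k, ||y_k − V V^T y_k||₂² ≤ 2Kε / p_k. -/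
/-!
Let `r = y_k - P y_k`. As `P` is the orthogonal projector onto the top-`K` eigenvectors,
`r ⬝ r = y_k ⬝ r`, hence `p_k (r ⬝ r)² ≤ rᵀ M r ≤ rᵀ M̂ r + ε (r ⬝ r)`. The eigenvalues `λ_j`, `j ∉ T`,
of `M̂` are at most `ε` (Courant–Fischer): the span of the eigenvectors indexed by `T ∪ {j}`
contains a nonzero vector orthogonal to every `y_m`, on which the form of `M` vanishes while that
of `M̂` is at least `λ_j`. Since `r` lies in the span of the remaining
eigenvectors, `rᵀ M̂ r ≤ ε (r ⬝ r)`, so `p_k (r ⬝ r)² ≤ 2ε (r ⬝ r)`, i.e. `r ⬝ r ≤ 2ε / p_k`.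
-/

open Matrix Finset

lemma dotProduct_self_eq_sum_sq {n : Type*} [Fintype n] (x : n → ℝ) :
    x ⬝ᵥ x = ∑ i, x i ^ 2 := by
  simp only [dotProduct, sq]

lemma dotProduct_self_nonneg {n : Type*} [Fintype n] (x : n → ℝ) : 0 ≤ x ⬝ᵥ x :=
  sum_nonneg fun i _ => mul_self_nonneg (x i)

lemma abs_dotProduct_le_of_sqrt_sum_sq_le {n : Type*} [Fintype n] {x z : n → ℝ} {ε : ℝ}
    (h : √(∑ i, z i ^ 2) ≤ ε * √(∑ i, x i ^ 2)) : |x ⬝ᵥ z| ≤ ε * (x ⬝ᵥ x) :=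
  calc |x ⬝ᵥ z| ≤ √(∑ i, x i ^ 2) * √(∑ i, z i ^ 2) := by
        rw [← Real.sqrt_mul (sum_nonneg fun i _ => sq_nonneg _)]
        exact Real.abs_le_sqrt (sum_mul_sq_le_sq_mul_sq _ _ _)
    _ ≤ √(∑ i, x i ^ 2) * (ε * √(∑ i, x i ^ 2)) := by gcongr
    _ = ε * (x ⬝ᵥ x) := by
        rw [mul_left_comm, Real.mul_self_sqrt (sum_nonneg fun i _ => sq_nonneg _),
          dotProduct_self_eq_sum_sq]

lemma dotProduct_sum_smul_outer_mulVec {n ι : Type*} [Fintype n] [Fintype ι] (p : ι → ℝ)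
    (y : ι → n → ℝ) (x : n → ℝ) :
    x ⬝ᵥ ((∑ m, p m • of fun i j => y m i * y m j) *ᵥ x) =
      ∑ m, p m * (y m ⬝ᵥ x) ^ 2 := by
  simp only [sum_mulVec, smul_mulVec, dotProduct_sum, dotProduct_smul, smul_eq_mul]
  refine sum_congr rfl fun m _ => ?_
  rw [show (of fun i j => y m i * y m j) = vecMulVec (y m) (y m) from rfl, vecMulVec_mulVec]
  simp [dotProduct_comm x, sq]

lemma le_div_of_mul_sq_le_mul {p c t : ℝ} (hp : 0 < p) (hc : 0 ≤ c) (ht : 0 ≤ t)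
    (h : p * t ^ 2 ≤ c * t) : t ≤ c / p := by
  rcases ht.eq_or_lt with rfl | ht
  · positivity
  · rw [le_div_iff₀ hp]
    exact le_of_mul_le_mul_right (by linarith) ht

namespace Matrix.IsHermitian

variable {n : Type*} [Fintype n] [DecidableEq n] {A : Matrix n n ℝ} (hA : A.IsHermitian)

lemma eigenvectorBasis_dotProduct (l m : n) :
    ⇑(hA.eigenvectorBasis l) ⬝ᵥ ⇑(hA.eigenvectorBasis m) = if l = m then 1 else 0 := by
  simpa [EuclideanSpace.inner_eq_star_dotProduct, eq_comm] using
    orthonormal_iff_ite.mp hA.eigenvectorBasis.orthonormal m l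

lemma sum_dotProduct_eigenvectorBasis_smul (x : n → ℝ) :
    ∑ l, (⇑(hA.eigenvectorBasis l) ⬝ᵥ x) • ⇑(hA.eigenvectorBasis l) = x := by
  simpa [EuclideanSpace.inner_eq_star_dotProduct, dotProduct_comm] using
    congrArg WithLp.ofLp (hA.eigenvectorBasis.sum_repr' (WithLp.toLp 2 x))

lemma dotProduct_eq_sum_eigenvectorBasis (x z : n → ℝ) :
    x ⬝ᵥ z =
      ∑ l, (⇑(hA.eigenvectorBasis l) ⬝ᵥ x) * (⇑(hA.eigenvectorBasis l) ⬝ᵥ z) := by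
  conv_lhs => rw [← hA.sum_dotProduct_eigenvectorBasis_smul x]
  rw [sum_dotProduct]
  refine sum_congr rfl fun l _ => ?_
  rw [smul_dotProduct, smul_eq_mul, dotProduct_comm]

lemma dotProduct_mulVec_eq_sum_eigenvalues (x : n → ℝ) :
    x ⬝ᵥ (A *ᵥ x) = ∑ l, hA.eigenvalues l * (⇑(hA.eigenvectorBasis l) ⬝ᵥ x) ^ 2 := by
  have hAx : A *ᵥ x = ∑ l, (hA.eigenvalues l * (⇑(hA.eigenvectorBasis l) ⬝ᵥ x)) •
      ⇑(hA.eigenvectorBasis l) := by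
    conv_lhs => rw [← hA.sum_dotProduct_eigenvectorBasis_smul x]
    simp [mulVec_sum, mulVec_smul, mulVec_eigenvectorBasis, smul_smul, mul_comm]
  rw [hAx]
  simp [dotProduct_sum, dotProduct_comm, sq, mul_assoc]

lemma mul_dotProduct_self_le_dotProduct_mulVec {μ : ℝ} {x : n → ℝ}
    (h : ∀ l, ⇑(hA.eigenvectorBasis l) ⬝ᵥ x ≠ 0 → μ ≤ hA.eigenvalues l) :
    μ * (x ⬝ᵥ x) ≤ x ⬝ᵥ (A *ᵥ x) := by
  rw [hA.dotProduct_mulVec_eq_sum_eigenvalues, hA.dotProduct_eq_sum_eigenvectorBasis x x, mul_sum]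
  refine sum_le_sum fun l _ => ?_
  by_cases hl : ⇑(hA.eigenvectorBasis l) ⬝ᵥ x = 0
  · simp [hl]
  · rw [← sq]
    exact mul_le_mul_of_nonneg_right (h l hl) (sq_nonneg _)

lemma dotProduct_mulVec_le_mul_dotProduct_self {μ : ℝ} {x : n → ℝ}
    (h : ∀ l, ⇑(hA.eigenvectorBasis l) ⬝ᵥ x ≠ 0 → hA.eigenvalues l ≤ μ) :
    x ⬝ᵥ (A *ᵥ x) ≤ μ * (x ⬝ᵥ x) := by
  rw [hA.dotProduct_mulVec_eq_sum_eigenvalues, hA.dotProduct_eq_sum_eigenvectorBasis x x, mul_sum]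
  refine sum_le_sum fun l _ => ?_
  by_cases hl : ⇑(hA.eigenvectorBasis l) ⬝ᵥ x = 0
  · simp [hl]
  · rw [← sq]
    exact mul_le_mul_of_nonneg_right (h l hl) (sq_nonneg _)

lemma exists_ne_zero_orthogonal_of_card_lt_card {ι : Type*} [Fintype ι] (y : ι → n → ℝ)
    (U : Finset n) (hU : Fintype.card ι < #U) :
    ∃ x ≠ 0, (∀ l, ⇑(hA.eigenvectorBasis l) ⬝ᵥ x ≠ 0 → l ∈ U) ∧ ∀ m, y m ⬝ᵥ x = 0 := by
  have hdep : ¬ LinearIndependent ℝ fun l : U => fun m => y m ⬝ᵥ hA.eigenvectorBasis l :=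
    fun hli => (hli.fintype_card_le_finrank.trans_lt (by simpa using hU)).ne (by simp)
  obtain ⟨g, hg, l₀, hl₀⟩ := Fintype.not_linearIndependent_iff.mp hdep
  set x : n → ℝ := ∑ l : U, g l • ⇑(hA.eigenvectorBasis l)
  have coord (j : n) : ⇑(hA.eigenvectorBasis j) ⬝ᵥ x = ∑ l : U, if j = l then g l else 0 := by
    simp only [x, dotProduct_sum, dotProduct_smul, eigenvectorBasis_dotProduct, smul_eq_mul,
      mul_ite, mul_one, mul_zero]
  refine ⟨x, fun h0 => hl₀ ?_, fun j hj => ?_, fun m => ?_⟩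
  · have h₀ := coord l₀
    rwa [h0, dotProduct_zero, eq_comm,
      sum_eq_single l₀ (fun l _ hl => if_neg fun h => hl (Subtype.ext h.symm)) (by simp),
      if_pos rfl] at h₀
  · by_contra hjU
    exact hj <| (coord j).trans <|
      sum_eq_zero fun l _ => if_neg (ne_of_mem_of_not_mem l.2 hjU).symm
  · simpa [x, dotProduct_sum, mul_comm] using congrFun hg m

lemma eigenvalues_le_of_dotProduct_mulVec_le {ι : Type*} [Fintype ι] (y : ι → n → ℝ) {ε : ℝ}
    (h : ∀ x, (∀ m, y m ⬝ᵥ x = 0) → x ⬝ᵥ (A *ᵥ x) ≤ ε * (x ⬝ᵥ x))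
    {T : Finset n} (hT : Fintype.card ι ≤ #T)
    (htop : ∀ i ∈ T, ∀ j ∉ T, hA.eigenvalues j ≤ hA.eigenvalues i) {j : n} (hj : j ∉ T) :
    hA.eigenvalues j ≤ ε := by
  obtain ⟨x, hx0, hxU, hxy⟩ := hA.exists_ne_zero_orthogonal_of_card_lt_card y (insert j T)
    (by rw [card_insert_of_notMem hj]; omega)
  have hlow : hA.eigenvalues j * (x ⬝ᵥ x) ≤ x ⬝ᵥ (A *ᵥ x) :=
    hA.mul_dotProduct_self_le_dotProduct_mulVec fun l hl => by
      rcases mem_insert.mp (hxU l hl) with rfl | hlT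
      exacts [le_rfl, htop l hlT j hj]
  have hpos : 0 < x ⬝ᵥ x :=
    (dotProduct_self_nonneg x).lt_of_ne' (dotProduct_self_eq_zero.not.mpr hx0)
  exact le_of_mul_le_mul_right (hlow.trans (h x hxy)) hpos

noncomputable def eigenvectorProjector (T : Finset n) : Matrix n n ℝ :=
  of fun i j => ∑ l ∈ T, hA.eigenvectorBasis l i * hA.eigenvectorBasis l j

lemma eigenvectorProjector_mulVec (T : Finset n) (x : n → ℝ) :
    hA.eigenvectorProjector T *ᵥ x =
      ∑ l ∈ T, (⇑(hA.eigenvectorBasis l) ⬝ᵥ x) • ⇑(hA.eigenvectorBasis l) := by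
  ext i
  simp only [eigenvectorProjector, mulVec, dotProduct, of_apply, sum_mul, Finset.sum_apply,
    Pi.smul_apply, smul_eq_mul]
  rw [sum_comm]
  exact sum_congr rfl fun l _ => sum_congr rfl fun j _ => by ring

lemma eigenvectorBasis_dotProduct_sub_eigenvectorProjector_mulVec (T : Finset n) (x : n → ℝ)
    (l : n) :
    ⇑(hA.eigenvectorBasis l) ⬝ᵥ (x - hA.eigenvectorProjector T *ᵥ x) =
      if l ∈ T then 0 else ⇑(hA.eigenvectorBasis l) ⬝ᵥ x := by
  rw [eigenvectorProjector_mulVec, dotProduct_sub, dotProduct_sum]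
  simp only [dotProduct_smul, eigenvectorBasis_dotProduct, smul_eq_mul, mul_ite, mul_one,
    mul_zero, sum_ite_eq]
  split_ifs <;> simp

lemma sub_eigenvectorProjector_mulVec_dotProduct_self (T : Finset n) (x : n → ℝ) :
    (x - hA.eigenvectorProjector T *ᵥ x) ⬝ᵥ (x - hA.eigenvectorProjector T *ᵥ x) =
      x ⬝ᵥ (x - hA.eigenvectorProjector T *ᵥ x) := by
  rw [hA.dotProduct_eq_sum_eigenvectorBasis, hA.dotProduct_eq_sum_eigenvectorBasis x]
  refine sum_congr rfl fun l _ => ?_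
  rw [eigenvectorBasis_dotProduct_sub_eigenvectorProjector_mulVec]
  split_ifs <;> simp

end Matrix.IsHermitian

theorem subspace_perturbation_bound_general (K S : ℕ) (ε : ℝ) (hε : 0 ≤ ε)
    (p : Fin K → ℝ) (hp : ∀ k, 0 < p k)
    (y : Fin K → (Fin S → ℝ))
    (Mhat : Matrix (Fin S) (Fin S) ℝ) (hHerm : Mhat.IsHermitian)
    (hclose : ∀ x : Fin S → ℝ,
      Real.sqrt (∑ i, ((Mhat *ᵥ x - (∑ k, p k • Matrix.of fun i j => y k i * y k j) *ᵥ x) i) ^ 2)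
        ≤ ε * Real.sqrt (∑ i, (x i) ^ 2))
    -- `T` indexes a set of `K` eigenvectors of `Mhat` with the largest eigenvalues
    (T : Finset (Fin S)) (hT : T.card = K)
    (htop : ∀ i ∈ T, ∀ j ∉ T, hHerm.eigenvalues j ≤ hHerm.eigenvalues i)
    -- `P` is the orthogonal projector onto the span of these top-`K` eigenvectors
    (P : Matrix (Fin S) (Fin S) ℝ)
    (hP : P = Matrix.of fun i j => ∑ l ∈ T, hHerm.eigenvectorBasis l i * hHerm.eigenvectorBasis l j) :
    ∀ k, ∑ i, ((y k - P *ᵥ y k) i) ^ 2 ≤ 2 * K * ε / p k := by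
  intro k
  have hquad (x : Fin S → ℝ) :
      |x ⬝ᵥ (Mhat *ᵥ x) - ∑ m, p m * (y m ⬝ᵥ x) ^ 2| ≤ ε * (x ⬝ᵥ x) := by
    rw [← dotProduct_sum_smul_outer_mulVec, ← dotProduct_sub]
    exact abs_dotProduct_le_of_sqrt_sum_sq_le (hclose x)
  have hsmall : ∀ j ∉ T, hHerm.eigenvalues j ≤ ε :=
    fun j => hHerm.eigenvalues_le_of_dotProduct_mulVec_le y (fun x hx => by
      simpa [hx] using (abs_le.mp (hquad x)).2) (by simp [hT]) htop
  obtain rfl : P = hHerm.eigenvectorProjector T := hP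
  set r := y k - hHerm.eigenvectorProjector T *ᵥ y k
  have hcoord (l : Fin S) (hl : ⇑(hHerm.eigenvectorBasis l) ⬝ᵥ r ≠ 0) : l ∉ T := fun hlT =>
    hl (by rw [hHerm.eigenvectorBasis_dotProduct_sub_eigenvectorProjector_mulVec, if_pos hlT])
  have hrr : r ⬝ᵥ r = y k ⬝ᵥ r :=
    hHerm.sub_eigenvectorProjector_mulVec_dotProduct_self T (y k)
  have hmain : p k * (r ⬝ᵥ r) ^ 2 ≤ 2 * ε * (r ⬝ᵥ r) :=
    calc p k * (r ⬝ᵥ r) ^ 2 = p k * (y k ⬝ᵥ r) ^ 2 := by rw [hrr]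
      _ ≤ ∑ m, p m * (y m ⬝ᵥ r) ^ 2 :=
        single_le_sum (f := fun m => p m * (y m ⬝ᵥ r) ^ 2)
          (fun m _ => mul_nonneg (hp m).le (sq_nonneg _)) (mem_univ k)
      _ ≤ r ⬝ᵥ (Mhat *ᵥ r) + ε * (r ⬝ᵥ r) := by linarith [(abs_le.mp (hquad r)).1]
      _ ≤ ε * (r ⬝ᵥ r) + ε * (r ⬝ᵥ r) := by
        gcongr
        exact hHerm.dotProduct_mulVec_le_mul_dotProduct_self fun l hl => hsmall l (hcoord l hl)
      _ = 2 * ε * (r ⬝ᵥ r) := by ring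
  have hK : (1 : ℝ) ≤ K := by exact_mod_cast k.pos
  rw [← dotProduct_self_eq_sum_sq]
  calc r ⬝ᵥ r ≤ 2 * ε / p k :=
        le_div_of_mul_sq_le_mul (hp k) (by positivity) (dotProduct_self_nonneg r) hmain
    _ ≤ 2 * K * ε / p k := div_le_div_of_nonneg_right (by nlinarith) (hp k).le

/-- Perturbation bound for subspace estimation: if `M = Σ_k p_k y_k y_kᵀ` with
`p_k > 0` and unit vectors `y_k`, `M̂` is a symmetric matrix with `‖M̂ − M‖ ≤ ε`
(operator norm), and `V Vᵀ` is the orthogonal projector onto a top-`K` eigenspace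
of `M̂`, then `‖y_k − V Vᵀ y_k‖₂² ≤ 2Kε/p_k` for each `k`. -/
theorem subspace_perturbation_bound (K S : ℕ) (ε : ℝ) (hε : 0 ≤ ε)
    (p : Fin K → ℝ) (hp : ∀ k, 0 < p k)
    (y : Fin K → (Fin S → ℝ)) (hy : ∀ k, ∑ i, (y k i) ^ 2 = 1)
    (Mhat : Matrix (Fin S) (Fin S) ℝ) (hHerm : Mhat.IsHermitian)
    (hclose : ∀ x : Fin S → ℝ,
      Real.sqrt (∑ i, ((Mhat *ᵥ x - (∑ k, p k • Matrix.of fun i j => y k i * y k j) *ᵥ x) i) ^ 2)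
        ≤ ε * Real.sqrt (∑ i, (x i) ^ 2))
    -- `T` indexes a set of `K` eigenvectors of `Mhat` with the largest eigenvalues
    (T : Finset (Fin S)) (hT : T.card = K)
    (htop : ∀ i ∈ T, ∀ j ∉ T, hHerm.eigenvalues j ≤ hHerm.eigenvalues i)
    -- `P` is the orthogonal projector onto the span of these top-`K` eigenvectors
    (P : Matrix (Fin S) (Fin S) ℝ)
    (hP : P = Matrix.of fun i j => ∑ l ∈ T, hHerm.eigenvectorBasis l i * hHerm.eigenvectorBasis l j) :
    ∀ k, ∑ i, ((y k - P *ᵥ y k) i) ^ 2 ≤ 2 * K * ε / p k :=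
  subspace_perturbation_bound_general K S ε hε p hp y Mhat hHerm hclose T hT htop P hP
end
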